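/- arXiv:1706.00381 — 12 statements merged into one kernel-verified Lean document; each statement's English description precedes it below -/
import Mathlib

section
/- If S is a cancellative semigroup and there exists a map g : S → S such that for all x, y in S: (a) x·g(x) = g(x)·x, (b) g(x)·g(y) = g(y)·g(x), and (c) (x·g(x))·(y·g(y)) = (y·g(y))·(x·g(x)), then S is commutative. -/
/-- A cancellative semigroup admitting a map `g` satisfying conditions (a), (b), (c)
is commutative. -/
theorem stmt_1 {S : Type*} [Semigroup S]
    (hl : ∀ x y z : S, x * y = x * z → y = z)
    (hr : ∀ x y z : S, y * x = z * x → y = z)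
    (g : S → S)
    (ha : ∀ x : S, x * g x = g x * x)
    (hb : ∀ x y : S, g x * g y = g y * g x)
    (hc : ∀ x y : S, (x * g x) * (y * g y) = (y * g y) * (x * g x)) :
    ∀ x y : S, x * y = y * x := by
  -- Step 1 : `g (x * g x)` is central.
  have step1 : ∀ x y : S, y * g (x * g x) = g (x * g x) * y := by
    intro x y
    have h2 : (x * g x) * ((y * g y) * g (x * g x)) =
        (x * g x) * (g (x * g x) * (y * g y)) := by
      calc (x * g x) * ((y * g y) * g (x * g x))
          = ((x * g x) * (y * g y)) * g (x * g x) := (mul_assoc (x * g x) (y * g y) _).symm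
        _ = ((y * g y) * (x * g x)) * g (x * g x) := by rw [hc x y]
        _ = (y * g y) * ((x * g x) * g (x * g x)) := mul_assoc (y * g y) (x * g x) _
        _ = ((x * g x) * g (x * g x)) * (y * g y) := hc y (x * g x)
        _ = (x * g x) * (g (x * g x) * (y * g y)) := mul_assoc (x * g x) _ (y * g y)
    have h3 : (y * g y) * g (x * g x) = g (x * g x) * (y * g y) := hl _ _ _ h2
    have h4 : (y * g (x * g x)) * g y = (g (x * g x) * y) * g y := by
      calc (y * g (x * g x)) * g y = y * (g (x * g x) * g y) := mul_assoc ..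
        _ = y * (g y * g (x * g x)) := by rw [hb (x * g x) y]
        _ = (y * g y) * g (x * g x) := (mul_assoc ..).symm
        _ = g (x * g x) * (y * g y) := h3
        _ = (g (x * g x) * y) * g y := (mul_assoc ..).symm
    exact hr _ _ _ h4
  -- Lemma L1 : `y` commutes with `g (a*y) * (a * g a)`.
  have L1 : ∀ a y : S, y * (g (a * y) * (a * g a)) = (g (a * y) * (a * g a)) * y := by
    intro a y
    have h1 : a * (y * (g (a * y) * (a * g a))) = a * (g a * ((a * y) * g (a * y))) := by
      calc a * (y * (g (a * y) * (a * g a)))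
          = (a * y) * (g (a * y) * (a * g a)) := (mul_assoc ..).symm
        _ = ((a * y) * g (a * y)) * (a * g a) := (mul_assoc ..).symm
        _ = (a * g a) * ((a * y) * g (a * y)) := hc (a * y) a
        _ = a * (g a * ((a * y) * g (a * y))) := mul_assoc ..
    have h2 : y * (g (a * y) * (a * g a)) = g a * ((a * y) * g (a * y)) := hl _ _ _ h1
    calc y * (g (a * y) * (a * g a))
        = g a * ((a * y) * g (a * y)) := h2
      _ = g a * (g (a * y) * (a * y)) := by rw [ha (a * y)]
      _ = (g a * g (a * y)) * (a * y) := (mul_assoc ..).symm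
      _ = (g (a * y) * g a) * (a * y) := by rw [hb a (a * y)]
      _ = g (a * y) * (g a * (a * y)) := mul_assoc ..
      _ = g (a * y) * ((g a * a) * y) := by rw [← mul_assoc (g a) a y]
      _ = g (a * y) * ((a * g a) * y) := by rw [ha a]
      _ = (g (a * y) * (a * g a)) * y := (mul_assoc ..).symm
  -- Lemma L2 : `g (a*y) * a` commutes with `y * g y`.
  have L2 : ∀ a y : S, (g (a * y) * a) * (y * g y) = (y * g y) * (g (a * y) * a) := by
    intro a y
    have hA : ((a * y) * g (a * y)) * (y * g y) = ((g (a * y) * a) * (y * g y)) * y := by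
      calc ((a * y) * g (a * y)) * (y * g y)
          = (g (a * y) * (a * y)) * (y * g y) := by rw [ha (a * y)]
        _ = ((g (a * y) * a) * y) * (y * g y) := by rw [← mul_assoc (g (a * y)) a y]
        _ = (g (a * y) * a) * (y * (y * g y)) := mul_assoc ..
        _ = (g (a * y) * a) * (y * (g y * y)) := by rw [ha y]
        _ = (g (a * y) * a) * ((y * g y) * y) := by rw [← mul_assoc y (g y) y]
        _ = ((g (a * y) * a) * (y * g y)) * y := (mul_assoc ..).symm
    have hB : (y * g y) * ((a * y) * g (a * y)) = ((y * g y) * (g (a * y) * a)) * y := by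
      calc (y * g y) * ((a * y) * g (a * y))
          = (y * g y) * (g (a * y) * (a * y)) := by rw [ha (a * y)]
        _ = (y * g y) * ((g (a * y) * a) * y) := by rw [← mul_assoc (g (a * y)) a y]
        _ = ((y * g y) * (g (a * y) * a)) * y := (mul_assoc ..).symm
    exact hr _ _ _ (hA.symm.trans ((hc (a * y) y).trans hB))
  -- Step 5 : every `g y` is central : `x * g y = g y * x`.
  have step5 : ∀ x y : S, x * g y = g y * x := by
    intro x y
    -- abbreviations
    set a := x * g x with ha_def
    set w := g (a * y) with hw_def
    -- `K = w * a` commutes with `y`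
    have hK : y * (w * a) = (w * a) * y := by
      have h1 := L1 a y
      -- y * (w * (a * g a)) = (w * (a * g a)) * y, and g a is central (step1)
      have h2 : (y * (w * a)) * g a = ((w * a) * y) * g a := by
        calc (y * (w * a)) * g a = y * ((w * a) * g a) := mul_assoc y (w * a) _
          _ = y * (w * (a * g a)) := by rw [mul_assoc w a (g a)]
          _ = (w * (a * g a)) * y := h1
          _ = ((w * a) * g a) * y := by rw [← mul_assoc w a (g a)]
          _ = (w * a) * (g a * y) := mul_assoc ..
          _ = (w * a) * (y * g a) := by rw [step1 x y]
          _ = ((w * a) * y) * g a := (mul_assoc ..).symm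
      exact hr _ _ _ h2
    have hK2 : (w * a) * (y * g y) = (y * g y) * (w * a) := L2 a y
    -- hence `K` commutes with `g y`
    have hK3 : (w * a) * g y = g y * (w * a) := by
      have h2 : y * ((w * a) * g y) = y * (g y * (w * a)) := by
        calc y * ((w * a) * g y) = (y * (w * a)) * g y := (mul_assoc ..).symm
          _ = ((w * a) * y) * g y := by rw [hK]
          _ = (w * a) * (y * g y) := mul_assoc ..
          _ = (y * g y) * (w * a) := hK2
          _ = y * (g y * (w * a)) := mul_assoc ..
      exact hl _ _ _ h2
    -- strip off `w` and then `g x`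
    have h4 : w * (a * g y) = w * (g y * a) := by
      calc w * (a * g y) = (w * a) * g y := (mul_assoc ..).symm
        _ = g y * (w * a) := hK3
        _ = (g y * w) * a := (mul_assoc ..).symm
        _ = (w * g y) * a := by rw [hb (a * y) y]
        _ = w * (g y * a) := mul_assoc ..
    have h5 : a * g y = g y * a := hl _ _ _ h4
    -- a = x * g x, cancel g x on the right
    have h6 : (x * g y) * g x = (g y * x) * g x := by
      calc (x * g y) * g x = x * (g y * g x) := mul_assoc ..
        _ = x * (g x * g y) := by rw [hb y x]
        _ = (x * g x) * g y := (mul_assoc ..).symm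
        _ = g y * (x * g x) := h5
        _ = (g y * x) * g x := (mul_assoc ..).symm
    exact hr _ _ _ h6
  -- Final step.
  intro x y
  have h1 : (x * y) * (g x * g y) = (y * x) * (g x * g y) := by
    calc (x * y) * (g x * g y) = x * (y * (g x * g y)) := mul_assoc ..
      _ = x * ((y * g x) * g y) := by rw [← mul_assoc y (g x) (g y)]
      _ = x * ((g x * y) * g y) := by rw [step5 y x]
      _ = x * (g x * (y * g y)) := by rw [mul_assoc (g x) y (g y)]
      _ = (x * g x) * (y * g y) := (mul_assoc ..).symm
      _ = (y * g y) * (x * g x) := hc x y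
      _ = y * (g y * (x * g x)) := mul_assoc ..
      _ = y * ((g y * x) * g x) := by rw [← mul_assoc (g y) x (g x)]
      _ = y * ((x * g y) * g x) := by rw [step5 x y]
      _ = y * (x * (g y * g x)) := by rw [mul_assoc x (g y) (g x)]
      _ = y * (x * (g x * g y)) := by rw [hb y x]
      _ = (y * x) * (g x * g y) := (mul_assoc y x (g x * g y)).symm
  exact hr _ _ _ h1
end

section
/- If S is a cancellative semigroup with a map g : S → S satisfying x·g(x) = g(x)·x and g(x)·g(y) = g(y)·g(x) for all x, y, then g(g(x)·y)·y = y·g(g(x)·y) for all x, y in S. -/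
/-- In a cancellative semigroup with a map `g` satisfying (a) and (b), the identity
`g(g(x)·y)·y = y·g(g(x)·y)` holds. -/
theorem stmt_2 {S : Type*} [Semigroup S]
    (hl : ∀ x y z : S, x * y = x * z → y = z)
    (hr : ∀ x y z : S, y * x = z * x → y = z)
    (g : S → S)
    (ha : ∀ x : S, x * g x = g x * x)
    (hb : ∀ x y : S, g x * g y = g y * g x) :
    ∀ x y : S, g (g x * y) * y = y * g (g x * y) := by
  intro x y
  apply hl (g x)
  have h1 : (g x * y) * g (g x * y) = g (g x * y) * (g x * y) := ha _
  calc g x * (g (g x * y) * y) = (g x * g (g x * y)) * y := by rw [mul_assoc]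
    _ = (g (g x * y) * g x) * y := by rw [hb]
    _ = g (g x * y) * (g x * y) := by rw [mul_assoc]
    _ = (g x * y) * g (g x * y) := h1.symm
    _ = g x * (y * g (g x * y)) := by rw [mul_assoc]
end

section
/- Let S be a cancellative semigroup and let p, q be relatively prime positive integers such that x^p y^p = y^p x^p and x^q y^q = y^q x^q for all x, y in S. Then S is commutative. -/
/-- `pw x n` is the `n`-th power of `x` in a semigroup, for `n ≥ 1`
(with the junk value `pw x 0 = x`). -/
def pw {S : Type*} [Semigroup S] (x : S) : ℕ → S
  | 0 => x
  | 1 => x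
  | n + 2 => pw x (n + 1) * x

lemma pw_one {S : Type*} [Semigroup S] (x : S) : pw x 1 = x := rfl

lemma pw_succ {S : Type*} [Semigroup S] (x : S) {n : ℕ} (h : 1 ≤ n) :
    pw x (n + 1) = pw x n * x := by
  match n, h with
  | m + 1, _ => rfl

lemma pw_add {S : Type*} [Semigroup S] (x : S) (a : ℕ) (ha : 1 ≤ a) :
    ∀ b, 1 ≤ b → pw x (a + b) = pw x a * pw x b := by
  intro b hb
  induction b, hb using Nat.le_induction with
  | base => rw [pw_succ x ha, pw_one]
  | succ m hm ih =>
    rw [show a + (m + 1) = (a + m) + 1 from rfl, pw_succ x (by omega), ih,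
      pw_succ x hm, mul_assoc]

/-- The conjugation identity `(xy)^k x = x (yx)^k`. -/
lemma pw_conj {S : Type*} [Semigroup S] (x y : S) :
    ∀ k, 1 ≤ k → pw (x * y) k * x = x * pw (y * x) k := by
  intro k hk
  induction k, hk using Nat.le_induction with
  | base => rw [pw_one, pw_one, mul_assoc]
  | succ m hm ih =>
    rw [pw_succ _ hm, pw_succ _ hm]
    calc pw (x * y) m * (x * y) * x
        = pw (x * y) m * x * (y * x) := by simp only [mul_assoc]
      _ = x * pw (y * x) m * (y * x) := by rw [ih]
      _ = x * (pw (y * x) m * (y * x)) := mul_assoc _ _ _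

/-- Euclidean descent: a predicate on positive integers closed under
"subtraction" which holds at two coprime values holds at 1. -/
lemma euclid (P : ℕ → Prop)
    (Psub : ∀ k l, 1 ≤ k → 1 ≤ l → P k → P (k + l) → P l) :
    ∀ n p q, p + q = n → 0 < p → 0 < q → Nat.Coprime p q → P p → P q → P 1 := by
  intro n
  induction n using Nat.strong_induction_on with
  | _ n ih =>
    intro p q hn hp hq hco hP hQ
    rcases lt_trichotomy p q with h | h | h
    · have hsub : P (q - p) := Psub p (q - p) hp (by omega) hP
        (by rwa [show p + (q - p) = q by omega])
      have hco' : Nat.Coprime p (q - p) :=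
        (Nat.coprime_sub_self_right (le_of_lt h)).mpr hco
      exact ih (p + (q - p)) (by omega) p (q - p) rfl hp (by omega) hco' hP hsub
    · subst h
      have h1 : p = 1 := (Nat.coprime_self p).mp hco
      exact h1 ▸ hP
    · have hsub : P (p - q) := Psub q (p - q) hq (by omega) hQ
        (by rwa [show q + (p - q) = p by omega])
      have hco' : Nat.Coprime (p - q) q :=
        (Nat.coprime_sub_self_left (le_of_lt h)).mpr hco
      exact ih ((p - q) + q) (by omega) (p - q) q rfl (by omega) hq hco' hsub hQ

/-- If `c^p = d^p` and `c^q = d^q` for coprime positive `p, q`,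
then `c = d` (using left cancellation). -/
lemma eq_pw_descend {S : Type*} [Semigroup S]
    (hl : ∀ x y z : S, x * y = x * z → y = z)
    {p q : ℕ} (hp : 0 < p) (hq : 0 < q) (hpq : Nat.Coprime p q)
    (c d : S) (hP : pw c p = pw d p) (hQ : pw c q = pw d q) : c = d := by
  have key := euclid (fun k => pw c k = pw d k) ?_ (p + q) p q rfl hp hq hpq hP hQ
  · exact key
  · intro k l hk hl' hPk hPkl
    rw [pw_add c k hk l hl', pw_add d k hk l hl', ← hPk] at hPkl
    exact hl (pw c k) _ _ hPkl

/-- If `z^p` and `z^q` commute with `c` for coprime positive `p, q`,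
then `z` commutes with `c` (using left cancellation). -/
lemma comm_pw_descend {S : Type*} [Semigroup S]
    (hl : ∀ x y z : S, x * y = x * z → y = z)
    {p q : ℕ} (hp : 0 < p) (hq : 0 < q) (hpq : Nat.Coprime p q)
    (z c : S) (hP : pw z p * c = c * pw z p) (hQ : pw z q * c = c * pw z q) :
    z * c = c * z := by
  have key := euclid (fun k => pw z k * c = c * pw z k) ?_ (p + q) p q rfl hp hq hpq hP hQ
  · exact key
  · intro k l hk hl' hPk hPkl
    rw [pw_add z k hk l hl'] at hPkl
    apply hl (pw z k)
    calc pw z k * (pw z l * c) = pw z k * pw z l * c := (mul_assoc _ _ _).symm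
      _ = c * (pw z k * pw z l) := hPkl
      _ = c * pw z k * pw z l := (mul_assoc _ _ _).symm
      _ = pw z k * c * pw z l := by rw [hPk]
      _ = pw z k * (c * pw z l) := mul_assoc _ _ _

/-- A cancellative semigroup in which `p`-th powers commute and `q`-th powers commute,
for relatively prime positive integers `p` and `q`, is commutative. -/
theorem stmt_3 {S : Type*} [Semigroup S]
    (hl : ∀ x y z : S, x * y = x * z → y = z)
    (hr : ∀ x y z : S, y * x = z * x → y = z)
    (p q : ℕ) (hp : 0 < p) (hq : 0 < q) (hpq : Nat.Coprime p q)
    (h1 : ∀ x y : S, pw x p * pw y p = pw y p * pw x p)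
    (h2 : ∀ x y : S, pw x q * pw y q = pw y q * pw x q) :
    ∀ x y : S, x * y = y * x := by
  -- Step 1: p-th powers commute with q-th powers.
  have hc : ∀ x y : S, pw x p * pw y q = pw y q * pw x p := by
    intro x y
    set a := pw x p with ha
    set b := pw y q with hb
    -- (ab)^p = (ba)^p
    have hcp : pw (a * b) p = pw (b * a) p := by
      have e1 : pw (a * b) p * a = a * pw (b * a) p := pw_conj a b p hp
      have e2 : pw (a * b) p * a = a * pw (a * b) p := h1 (a * b) x
      exact hl a _ _ (e2.symm.trans e1)
    -- (ab)^q = (ba)^q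
    have hcq : pw (a * b) q = pw (b * a) q := by
      have e1 : pw (b * a) q * b = b * pw (a * b) q := pw_conj b a q hq
      have e2 : pw (b * a) q * b = b * pw (b * a) q := h2 (b * a) y
      exact hl b _ _ (e1.symm.trans e2)
    exact eq_pw_descend hl hp hq hpq (a * b) (b * a) hcp hcq
  -- Step 2: p-th powers are central.
  have hcentp : ∀ x z : S, pw x p * z = z * pw x p := by
    intro x z
    exact (comm_pw_descend hl hp hq hpq z (pw x p) (h1 z x) ((hc x z).symm)).symm
  -- Step 3: q-th powers are central.
  have hcentq : ∀ x z : S, pw x q * z = z * pw x q := by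
    intro x z
    exact (comm_pw_descend hl hp hq hpq z (pw x q) (hc z x) (h2 z x)).symm
  -- Step 4: combine.
  intro x y
  exact comm_pw_descend hl hp hq hpq x y (hcentp x y) (hcentq x y)
end

section
/- Let G be a group and let p, q be relatively prime positive integers such that x^p y^p = y^p x^p and x^q y^q = y^q x^q for all x, y in G. Then G is abelian. -/
/-!
By Bézout, every element is a product of a `p`-th power and a `q`-th power. Hence anything
commuting with all `p`-th and all `q`-th powers is central; in particular `x ^ (p * q)` is.
For `a = x ^ p` and `b = y ^ q`, the commutator `⁅a, b⁆` is a product of two `p`-th powers and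
also of two `q`-th powers, so it is central. A central commutator is multiplicative in each
argument, so `⁅a, b⁆ ^ q = ⁅a ^ q, b⁆ = 1` and `⁅a, b⁆ ^ p = ⁅a, b ^ p⁆ = 1`, whence `⁅a, b⁆ = 1`.
So `p`-th powers commute with `q`-th powers, and writing `x` and `y` as products of such powers
shows that they commute.
-/

open scoped commutatorElement

section Commutator

variable {G : Type*} [Group G]

theorem commutatorElement_pow_left_of_commute {a b : G} (h : Commute a ⁅a, b⁆) (n : ℕ) :
    ⁅a ^ n, b⁆ = ⁅a, b⁆ ^ n := by
  induction n with
  | zero => simp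
  | succ n ih =>
    calc ⁅a ^ (n + 1), b⁆ = a * ⁅a ^ n, b⁆ * a⁻¹ * ⁅a, b⁆ := by
          simp only [commutatorElement_def, pow_succ']; group
      _ = ⁅a, b⁆ ^ (n + 1) := by
          rw [ih, (h.pow_right n).eq, mul_inv_cancel_right, pow_succ]

theorem commutatorElement_pow_eq_one {a b : G} {n : ℕ} (h : Commute a ⁅a, b⁆)
    (hn : Commute (a ^ n) b) : ⁅a, b⁆ ^ n = 1 := by
  rw [← commutatorElement_pow_left_of_commute h, commutatorElement_eq_one_iff_commute]
  exact hn

end Commutator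

section CoprimePowers

variable {G : Type*} [Group G] {p q : ℕ}

theorem exists_pow_mul_pow_eq_of_coprime (hpq : p.Coprime q) (t : G) :
    ∃ u v : G, u ^ p * v ^ q = t := by
  refine ⟨t ^ p.gcdA q, t ^ p.gcdB q, ?_⟩
  rw [← zpow_natCast, ← zpow_natCast, ← zpow_mul, ← zpow_mul, ← zpow_add, mul_comm,
    mul_comm _ (q : ℤ), ← Nat.gcd_eq_gcd_ab, hpq.gcd_eq_one, Nat.cast_one, zpow_one]

theorem commute_of_commute_pow_of_commute_pow (hpq : p.Coprime q) {d : G}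
    (hp : ∀ u : G, Commute d (u ^ p)) (hq : ∀ v : G, Commute d (v ^ q)) (t : G) :
    Commute d t := by
  obtain ⟨u, v, rfl⟩ := exists_pow_mul_pow_eq_of_coprime hpq t
  exact (hp u).mul_right (hq v)

variable (hpq : p.Coprime q) (hp : ∀ x y : G, Commute (x ^ p) (y ^ p))
  (hq : ∀ x y : G, Commute (x ^ q) (y ^ q))
include hpq hp hq

theorem commute_pow_mul_of_coprime (x t : G) : Commute (x ^ (p * q)) t := by
  refine commute_of_commute_pow_of_commute_pow hpq (fun u ↦ ?_) (fun v ↦ ?_) t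
  · rw [mul_comm, pow_mul]; exact hp _ u
  · rw [pow_mul]; exact hq _ v

theorem commute_pow_pow_of_coprime (x y : G) : Commute (x ^ p) (y ^ q) := by
  set a := x ^ p
  set b := y ^ q
  have hd : ∀ t : G, Commute ⁅a, b⁆ t := by
    refine commute_of_commute_pow_of_commute_pow hpq (fun u ↦ ?_) (fun v ↦ ?_)
    · have : ⁅a, b⁆ = x ^ p * (b * x⁻¹ * b⁻¹) ^ p := by
        rw [conj_pow, inv_pow, commutatorElement_def, mul_assoc (x ^ p), mul_assoc (x ^ p)]
      rw [this]; exact (hp x u).mul_left (hp _ u)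
    · have : ⁅a, b⁆ = (a * y * a⁻¹) ^ q * y⁻¹ ^ q := by
        rw [conj_pow, inv_pow, commutatorElement_def]
      rw [this]; exact (hq _ v).mul_left (hq _ v)
  have hdq : ⁅a, b⁆ ^ q = 1 := by
    refine commutatorElement_pow_eq_one (hd a).symm ?_
    rw [← pow_mul]; exact commute_pow_mul_of_coprime hpq hp hq x b
  have hdp : ⁅a, b⁆ ^ p = 1 := by
    rw [← inv_eq_one, ← inv_pow, commutatorElement_inv]
    refine commutatorElement_pow_eq_one ?_ ?_
    · rw [← commutatorElement_inv]; exact ((hd b).inv_left).symm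
    · rw [← pow_mul, mul_comm]; exact commute_pow_mul_of_coprime hpq hp hq y a
  rw [← commutatorElement_eq_one_iff_commute, ← pow_eq_one_iff_of_coprime hpq]
  exact ⟨hdp, hdq⟩

end CoprimePowers

theorem stmt_4_general {G : Type*} [Group G]
    (p q : ℕ) (hpq : Nat.Coprime p q)
    (h1 : ∀ x y : G, x ^ p * y ^ p = y ^ p * x ^ p)
    (h2 : ∀ x y : G, x ^ q * y ^ q = y ^ q * x ^ q) :
    ∀ x y : G, x * y = y * x := by
  have hpow := commute_pow_pow_of_coprime hpq h1 h2
  intro x y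
  obtain ⟨u, v, rfl⟩ := exists_pow_mul_pow_eq_of_coprime hpq x
  obtain ⟨u', v', rfl⟩ := exists_pow_mul_pow_eq_of_coprime hpq y
  refine Commute.mul_left ?_ ?_
  · exact Commute.mul_right (h1 u u') (hpow u v')
  · exact (hpow u' v).symm.mul_right (h2 v v' : Commute _ _)

/-- A group in which `p`-th powers commute and `q`-th powers commute, for relatively
prime positive integers `p` and `q`, is abelian. -/
theorem stmt_4 {G : Type*} [Group G]
    (p q : ℕ) (hp : 0 < p) (hq : 0 < q) (hpq : Nat.Coprime p q)
    (h1 : ∀ x y : G, x ^ p * y ^ p = y ^ p * x ^ p)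
    (h2 : ∀ x y : G, x ^ q * y ^ q = y ^ q * x ^ q) :
    ∀ x y : G, x * y = y * x :=
  stmt_4_general p q hpq h1 h2
end

section
/- Let S be a cancellative semigroup such that for each pair a, b in S there exists a nonnegative integer i (depending on a and b) with (ab)^i = a^i b^i, (ab)^{i+1} = a^{i+1} b^{i+1}, and (ab)^{i+2} = a^{i+2} b^{i+2}. Then S is commutative. -/
lemma pw_key {S : Type*} [Semigroup S]
    (hl : ∀ x y z : S, x * y = x * z → y = z)
    (hr : ∀ x y z : S, y * x = z * x → y = z)
    (a b : S) (m : ℕ)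
    (h1 : pw (a * b) (m + 1) = pw a (m + 1) * pw b (m + 1))
    (h2 : pw (a * b) (m + 2) = pw a (m + 2) * pw b (m + 2)) :
    pw b (m + 1) * a = a * pw b (m + 1) := by
  have h2' : pw (a * b) (m + 1) * (a * b)
      = (pw a (m + 1) * a) * (pw b (m + 1) * b) := h2
  rw [h1] at h2'
  apply hr b
  apply hl (pw a (m + 1))
  simp only [← mul_assoc] at h2' ⊢
  exact h2'

/-- A cancellative semigroup in which every pair of elements satisfies
`(ab)^i = a^i b^i` for three consecutive nonnegative exponents `i, i+1, i+2`
(depending on the pair) is commutative. -/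
theorem stmt_7 {S : Type*} [Semigroup S]
    (hl : ∀ x y z : S, x * y = x * z → y = z)
    (hr : ∀ x y z : S, y * x = z * x → y = z)
    (h : ∀ a b : S, ∃ i : ℕ,
      pw (a * b) i = pw a i * pw b i ∧
      pw (a * b) (i + 1) = pw a (i + 1) * pw b (i + 1) ∧
      pw (a * b) (i + 2) = pw a (i + 2) * pw b (i + 2)) :
    ∀ x y : S, x * y = y * x := by
  intro a b
  obtain ⟨i, e0, e1, e2⟩ := h a b
  match i, e0, e1, e2 with
  | 0, e0, e1, e2 =>
    exact (pw_key hl hr a b 0 e1 e2).symm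
  | m + 1, e0, e1, e2 =>
    have H1 : pw b (m + 1) * a = a * pw b (m + 1) := pw_key hl hr a b m e0 e1
    have H2 : pw b (m + 2) * a = a * pw b (m + 2) := pw_key hl hr a b (m + 1) e1 e2
    -- pw b (m+2) = pw b (m+1) * b
    have H2' : (pw b (m + 1) * b) * a = a * (pw b (m + 1) * b) := H2
    apply hl (pw b (m + 1))
    calc pw b (m + 1) * (a * b) = (pw b (m + 1) * a) * b := by rw [mul_assoc]
      _ = (a * pw b (m + 1)) * b := by rw [H1]
      _ = a * (pw b (m + 1) * b) := by rw [mul_assoc]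
      _ = (pw b (m + 1) * b) * a := H2'.symm
      _ = pw b (m + 1) * (b * a) := by rw [mul_assoc]
end

section
/- Let G be a group such that for some fixed integer i, (ab)^i = a^i b^i, (ab)^{i+1} = a^{i+1} b^{i+1}, and (ab)^{i+2} = a^{i+2} b^{i+2} hold for all a, b in G. Then G is abelian. -/
/-- A group satisfying `(ab)^j = a^j b^j` for all `a, b`, for three consecutive integer
exponents `j = i, i+1, i+2`, is abelian. -/
theorem stmt_8 {G : Type*} [Group G] (i : ℤ)
    (h0 : ∀ a b : G, (a * b) ^ i = a ^ i * b ^ i)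
    (h1 : ∀ a b : G, (a * b) ^ (i + 1) = a ^ (i + 1) * b ^ (i + 1))
    (h2 : ∀ a b : G, (a * b) ^ (i + 2) = a ^ (i + 2) * b ^ (i + 2)) :
    ∀ x y : G, x * y = y * x := by
  have key : ∀ j : ℤ, (∀ a b : G, (a * b) ^ j = a ^ j * b ^ j) →
      (∀ a b : G, (a * b) ^ (j + 1) = a ^ (j + 1) * b ^ (j + 1)) →
      ∀ a b : G, a * b ^ j = b ^ j * a := by
    intro j hj hj1 a b
    have h := hj1 a b
    rw [zpow_add_one, zpow_add_one, zpow_add_one, hj a b] at h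
    -- h : a ^ j * b ^ j * (a * b) = a ^ j * a * (b ^ j * b)
    have h' : b ^ j * a = a * b ^ j := by
      have := mul_right_cancel (a := a ^ j * (b ^ j * a)) (b := b) (c := a ^ j * (a * b ^ j)) (by
        rw [← mul_assoc, ← mul_assoc]
        calc a ^ j * b ^ j * a * b = a ^ j * b ^ j * (a * b) := by group
          _ = a ^ j * a * (b ^ j * b) := h
          _ = a ^ j * a * b ^ j * b := by group)
      exact mul_left_cancel this
    exact h'.symm
  have c1 := key i h0 h1
  have c2 : ∀ a b : G, a * b ^ (i + 1) = b ^ (i + 1) * a := by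
    apply key (i + 1) h1
    intro a b
    have := h2 a b
    rw [show i + 1 + 1 = i + 2 by ring]
    exact this
  intro x y
  have hc2 := c2 x y
  rw [zpow_add_one, ← mul_assoc, c1 x y, mul_assoc, mul_assoc] at hc2
  exact mul_left_cancel hc2
end

section
/- Let S be an inverse semigroup and suppose there exists an integer k > 1 such that (xy)^k = x^k y^k for all x, y in S. Then x·x⁻¹ = x⁻¹·x for all x in S, i.e., S is a Clifford semigroup. -/
/-- An inverse semigroup: every element has a unique inverse `x⁻¹`
with `x * x⁻¹ * x = x` and `x⁻¹ * x * x⁻¹ = x⁻¹`. -/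
class InverseSemigroup (S : Type*) extends Semigroup S, Inv S where
  mul_inv_mul : ∀ x : S, x * x⁻¹ * x = x
  inv_mul_inv : ∀ x : S, x⁻¹ * x * x⁻¹ = x⁻¹
  inv_unique : ∀ x y : S, x * y * x = x → y * x * y = y → y = x⁻¹

namespace ISAux

variable {S : Type*} [InverseSemigroup S]

lemma mii (x : S) : x * x⁻¹ * x = x := InverseSemigroup.mul_inv_mul x
lemma imi (x : S) : x⁻¹ * x * x⁻¹ = x⁻¹ := InverseSemigroup.inv_mul_inv x

lemma r2 {a b c : S} (h : a * b = c) : ∀ z : S, a * (b * z) = c * z := by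
  intro z; rw [← h, mul_assoc]

lemma ext_z {a b : S} (h : a = b) (z : S) : a * z = b * z := by rw [h]

lemma inv_inv' (x : S) : x⁻¹⁻¹ = x :=
  (InverseSemigroup.inv_unique x⁻¹ x (imi x) (mii x)).symm

lemma idem_inv {e : S} (he : e * e = e) : e⁻¹ = e :=
  (InverseSemigroup.inv_unique e e (by rw [he, he]) (by rw [he, he])).symm

lemma idem_e (x : S) : (x * x⁻¹) * (x * x⁻¹) = x * x⁻¹ := by
  rw [← mul_assoc, mii]

lemma idem_f (x : S) : (x⁻¹ * x) * (x⁻¹ * x) = x⁻¹ * x := by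
  rw [← mul_assoc, imi]

lemma mul_idem {e f : S} (he : e * e = e) (hf : f * f = f) :
    (e * f) * (e * f) = e * f := by
  have hinner : (e*f)⁻¹ * (e * (f * ((e*f)⁻¹ * e))) = (e*f)⁻¹ * e := by
    have := ext_z (imi (e*f)) e
    simpa only [mul_assoc] using this
  have h1 : (e*f) * (f * ((e*f)⁻¹ * e)) * (e*f) = e*f := by
    simp only [mul_assoc]
    rw [r2 hf, r2 he]
    simpa only [mul_assoc] using mii (e*f)
  have h2 : (f * ((e*f)⁻¹ * e)) * (e*f) * (f * ((e*f)⁻¹ * e)) = f * ((e*f)⁻¹ * e) := by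
    simp only [mul_assoc]
    rw [r2 he, r2 hf, hinner]
  have h3 : f * ((e*f)⁻¹ * e) = (e*f)⁻¹ := InverseSemigroup.inv_unique _ _ h1 h2
  have h4 : (e*f)⁻¹ * (e*f)⁻¹ = (e*f)⁻¹ := by
    conv_lhs => rw [← h3]
    simp only [mul_assoc]
    rw [hinner, h3]
  have h5 : (e*f)⁻¹ = e*f := by
    have h6 := idem_inv h4
    rw [inv_inv'] at h6
    exact h6.symm
  rw [← h5]; exact h4

lemma idem_comm {e f : S} (he : e * e = e) (hf : f * f = f) : e * f = f * e := by
  have hef := mul_idem he hf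
  have hfe := mul_idem hf he
  have h1 : (e*f) * (f*e) * (e*f) = e*f := by
    simp only [mul_assoc]
    rw [r2 hf, r2 he]
    simpa only [mul_assoc] using hef
  have h2 : (f*e) * (e*f) * (f*e) = f*e := by
    simp only [mul_assoc]
    rw [r2 he, r2 hf]
    simpa only [mul_assoc] using hfe
  have h3 : f*e = (e*f)⁻¹ := InverseSemigroup.inv_unique _ _ h1 h2
  rw [h3, idem_inv hef]

lemma pw_succ (x : S) (n : ℕ) : pw x (n+2) = pw x (n+1) * x := rfl

lemma pw_succ' (x : S) (n : ℕ) : pw x (n+2) = x * pw x (n+1) := by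
  induction n with
  | zero => rfl
  | succ n ih =>
    rw [pw_succ x (n+1)]
    conv_lhs => rw [ih]
    rw [mul_assoc, ← pw_succ]

lemma pw_idem {e : S} (he : e * e = e) : ∀ n, pw e n = e
  | 0 => rfl
  | 1 => rfl
  | (n+2) => by rw [pw_succ, pw_idem he (n+1), he]

/-- `E x n = x^n (x⁻¹)^n`. -/
def E (x : S) (n : ℕ) : S := pw x n * pw x⁻¹ n

lemma E_one (x : S) : E x 1 = x * x⁻¹ := rfl

lemma E_succ (x : S) (n : ℕ) : E x (n+2) = x * E x (n+1) * x⁻¹ := by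
  unfold E
  rw [pw_succ' x n, pw_succ x⁻¹ n]
  simp only [mul_assoc]

lemma imi' (x : S) : x⁻¹ * (x * x⁻¹) = x⁻¹ := by
  simpa only [mul_assoc] using imi x

lemma E_idem (x : S) : ∀ n, E x (n+1) * E x (n+1) = E x (n+1)
  | 0 => idem_e x
  | (n+1) => by
    have ih := E_idem x n
    rw [E_succ]
    simp only [mul_assoc]
    have hc : ∀ z : S, x⁻¹ * (x * (E x (n+1) * z)) = E x (n+1) * (x⁻¹ * (x * z)) := by
      intro z
      have := ext_z (idem_comm (idem_f x) ih) z
      simpa only [mul_assoc] using this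
    rw [hc x⁻¹, r2 ih, imi' x]

lemma E_conj (x : S) (n : ℕ) : x⁻¹ * E x (n+2) = E x (n+1) * x⁻¹ := by
  rw [E_succ]
  simp only [mul_assoc]
  have hc : ∀ z : S, x⁻¹ * (x * (E x (n+1) * z)) = E x (n+1) * (x⁻¹ * (x * z)) := by
    intro z
    have := ext_z (idem_comm (idem_f x) (E_idem x n)) z
    simpa only [mul_assoc] using this
  rw [hc x⁻¹, imi' x]

lemma E_le (x : S) : ∀ n, E x (n+2) * E x (n+1) = E x (n+2)
  | 0 => by
    rw [E_succ, E_one]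
    simp only [mul_assoc]
    rw [imi' x]
  | (n+1) => by
    have ih := E_le x n
    rw [E_succ x (n+1)]
    simp only [mul_assoc]
    rw [E_conj x n]
    have ih' : ∀ z : S, E x (n+2) * (E x (n+1) * z) = E x (n+2) * z := by
      intro z
      have := ext_z ih z
      simpa only [mul_assoc] using this
    rw [ih' x⁻¹]

lemma E_le2 (x : S) : ∀ n, E x (n+2) * E x 2 = E x (n+2)
  | 0 => E_idem x 1
  | (n+1) => by
    have ih := E_le2 x n
    conv_lhs => rw [← E_le x (n+1)]
    rw [mul_assoc, ih, E_le x (n+1)]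

/-- From `y y⁻¹ = y² (y⁻¹)²` for all `y`, deduce `x⁻¹x = (x x⁻¹)(x⁻¹ x)`. -/
lemma step (hkey : ∀ y : S, y * y⁻¹ = (y * y) * (y⁻¹ * y⁻¹)) (x : S) :
    x⁻¹ * x = (x * x⁻¹) * (x⁻¹ * x) := by
  have h1 : x⁻¹ * (x * (x⁻¹ * x)) = x⁻¹ * x := by
    simpa only [mul_assoc] using ext_z (imi x) x
  have h2 := congrArg (fun z => x⁻¹ * z * x) (hkey x)
  simp only [mul_assoc] at h2
  rw [h1] at h2
  -- h2 : x⁻¹ * x = x⁻¹ * (x * (x * (x⁻¹ * (x⁻¹ * x))))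
  have h3 : x⁻¹ * x = (x⁻¹ * x) * ((x * x⁻¹) * (x⁻¹ * x)) := by
    conv_lhs => rw [h2]
    simp only [mul_assoc]
  conv_lhs => rw [h3, ← mul_assoc, idem_comm (idem_f x) (idem_e x), mul_assoc, idem_f x]

end ISAux

open ISAux in
/-- An inverse semigroup satisfying `(xy)^k = x^k y^k` for some fixed `k > 1` is a
Clifford semigroup: every element commutes with its inverse. -/
theorem stmt_9 {S : Type*} [InverseSemigroup S]
    (k : ℕ) (hk : 1 < k)
    (h : ∀ x y : S, pw (x * y) k = pw x k * pw y k) :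
    ∀ x : S, x * x⁻¹ = x⁻¹ * x := by
  obtain ⟨m, rfl⟩ : ∃ m, k = m + 2 := ⟨k - 2, by omega⟩
  have hkey : ∀ y : S, y * y⁻¹ = (y * y) * (y⁻¹ * y⁻¹) := by
    intro y
    have hE : y * y⁻¹ = E y (m+2) := by
      have hy := h y y⁻¹
      rw [pw_idem (idem_e y) (m+2)] at hy
      exact hy
    have h12 : E y 1 = E y 2 :=
      calc E y 1 = E y (m+2) := hE
        _ = E y (m+2) * E y 2 := (E_le2 y m).symm
        _ = E y 1 * E y 2 := by rw [← hE]; rfl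
        _ = E y 2 * E y 1 := idem_comm (E_idem y 0) (E_idem y 1)
        _ = E y 2 := E_le y 0
    exact h12
  intro x
  calc x * x⁻¹ = (x⁻¹ * x) * (x * x⁻¹) := by
        have hB := step hkey x⁻¹
        rwa [inv_inv'] at hB
    _ = (x * x⁻¹) * (x⁻¹ * x) := idem_comm (idem_f x) (idem_e x)
    _ = x⁻¹ * x := (step hkey x).symm
end

section
/- In an inverse semigroup S satisfying (xy)^k = x^k y^k for all x, y (for some fixed integer k > 1), the identities x⁻¹·x·x = x and x·x⁻¹·x⁻¹ = x⁻¹ hold for all x in S. -/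
section PwLemmas

variable {T : Type*} [Semigroup T]

theorem my_pw_one (x : T) : pw x 1 = x := rfl

theorem my_pw_two (x : T) : pw x 2 = x * x := rfl

theorem my_pw_succ (x : T) : ∀ n, 1 ≤ n → pw x (n + 1) = pw x n * x
  | 0, h => absurd h (by omega)
  | (_ + 1), _ => rfl

theorem my_pw_succ' (x : T) : ∀ n, 1 ≤ n → pw x (n + 1) = x * pw x n
  | 0, h => absurd h (by omega)
  | 1, _ => rfl
  | (n + 2), _ => by
    calc pw x (n + 3) = (x * pw x (n + 1)) * x := by
          rw [show pw x (n + 3) = pw x (n + 2) * x from rfl,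
            my_pw_succ' x (n + 1) (by omega)]
      _ = x * (pw x (n + 1) * x) := mul_assoc _ _ _
      _ = x * pw x (n + 2) := rfl

theorem my_pw_add (x : T) : ∀ m n, 1 ≤ m → 1 ≤ n → pw x m * pw x n = pw x (m + n)
  | _, 0, _, hn => absurd hn (by omega)
  | m, 1, hm, _ => (my_pw_succ x m hm).symm
  | m, (n + 2), hm, _ => by
    calc pw x m * pw x (n + 2) = pw x m * (pw x (n + 1) * x) := rfl
      _ = (pw x m * pw x (n + 1)) * x := (mul_assoc _ _ _).symm
      _ = pw x (m + (n + 1)) * x := by rw [my_pw_add x m (n + 1) hm (by omega)]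
      _ = pw x (m + (n + 2)) := by
          rw [show m + (n + 2) = (m + (n + 1)) + 1 by omega,
            my_pw_succ x (m + (n + 1)) (by omega)]

theorem my_pw_idem {e : T} (he : e * e = e) : ∀ n, pw e n = e
  | 0 => rfl
  | 1 => rfl
  | (n + 2) => by
    show pw e (n + 1) * e = e
    rw [my_pw_idem he (n + 1), he]

end PwLemmas

section InvLemmas

variable {S : Type*} [InverseSemigroup S]

open InverseSemigroup

theorem my_inv_inv (x : S) : x⁻¹⁻¹ = x :=
  (inv_unique x⁻¹ x (inv_mul_inv x) (mul_inv_mul x)).symm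

theorem my_mul_inv_idem (x : S) : (x * x⁻¹) * (x * x⁻¹) = x * x⁻¹ := by
  have : (x * x⁻¹) * (x * x⁻¹) = (x * x⁻¹ * x) * x⁻¹ := by simp only [mul_assoc]
  rw [this, mul_inv_mul]

theorem my_inv_mul_idem (x : S) : (x⁻¹ * x) * (x⁻¹ * x) = x⁻¹ * x := by
  have : (x⁻¹ * x) * (x⁻¹ * x) = (x⁻¹ * x * x⁻¹) * x := by simp only [mul_assoc]
  rw [this, inv_mul_inv]

theorem my_idem_absorb {e : S} (he : e * e = e) (y : S) : e * (e * y) = e * y := by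
  rw [← mul_assoc, he]

/-- For an idempotent `u`, `u⁻¹ = u`. -/
theorem my_idem_inv {u : S} (hu : u * u = u) : u⁻¹ = u :=
  (inv_unique u u (by rw [hu, hu]) (by rw [hu, hu])).symm

/-- The product of two idempotents is idempotent. -/
theorem my_idem_mul {e f : S} (he : e * e = e) (hf : f * f = f) :
    (e * f) * (e * f) = e * f := by
  -- f * ((e*f)⁻¹ * e) is an inverse of e*f, hence equals (e*f)⁻¹.
  have hg1 := mul_inv_mul (e * f)
  have hg2 := inv_mul_inv (e * f)
  simp only [mul_assoc] at hg1 hg2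
  have h2' : (e * f)⁻¹ * (e * (f * ((e * f)⁻¹ * e))) = (e * f)⁻¹ * e := by
    calc (e * f)⁻¹ * (e * (f * ((e * f)⁻¹ * e)))
        = ((e * f)⁻¹ * (e * (f * (e * f)⁻¹))) * e := by simp only [mul_assoc]
      _ = (e * f)⁻¹ * e := by rw [hg2]
  have hfge : f * ((e * f)⁻¹ * e) = (e * f)⁻¹ := by
    apply InverseSemigroup.inv_unique
    · calc (e * f) * (f * ((e * f)⁻¹ * e)) * (e * f)
          = e * (f * (f * ((e * f)⁻¹ * (e * (e * f))))) := by simp only [mul_assoc]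
        _ = e * (f * ((e * f)⁻¹ * (e * (e * f)))) := by rw [my_idem_absorb hf]
        _ = e * (f * ((e * f)⁻¹ * (e * f))) := by rw [my_idem_absorb he]
        _ = e * f := hg1
    · calc (f * ((e * f)⁻¹ * e)) * (e * f) * (f * ((e * f)⁻¹ * e))
          = f * ((e * f)⁻¹ * (e * (e * (f * (f * ((e * f)⁻¹ * e)))))) := by
            simp only [mul_assoc]
        _ = f * ((e * f)⁻¹ * (e * (f * (f * ((e * f)⁻¹ * e))))) := by
            rw [my_idem_absorb he]
        _ = f * ((e * f)⁻¹ * (e * (f * ((e * f)⁻¹ * e)))) := by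
            rw [my_idem_absorb hf]
        _ = f * ((e * f)⁻¹ * e) := by rw [h2']
  -- hence (e*f)⁻¹ is idempotent:
  have hgg : (e * f)⁻¹ * (e * f)⁻¹ = (e * f)⁻¹ := by
    conv_lhs => rw [← hfge]
    calc (f * ((e * f)⁻¹ * e)) * (f * ((e * f)⁻¹ * e))
        = f * ((e * f)⁻¹ * (e * (f * ((e * f)⁻¹ * e)))) := by simp only [mul_assoc]
      _ = f * ((e * f)⁻¹ * e) := by rw [h2']
      _ = (e * f)⁻¹ := hfge
  -- hence e*f = ((e*f)⁻¹)⁻¹ = (e*f)⁻¹ is idempotent: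
  have hef_eq : e * f = (e * f)⁻¹ := by
    conv_lhs => rw [← my_inv_inv (e * f)]
    exact my_idem_inv hgg
  rw [hef_eq]; exact hgg

/-- Idempotents commute. -/
theorem my_idem_comm {e f : S} (he : e * e = e) (hf : f * f = f) :
    e * f = f * e := by
  have hefi := my_idem_mul he hf
  have hfei := my_idem_mul hf he
  have hinv : (e * f)⁻¹ = e * f := my_idem_inv hefi
  have : f * e = (e * f)⁻¹ := by
    apply InverseSemigroup.inv_unique
    · calc (e * f) * (f * e) * (e * f)
          = e * (f * (f * (e * (e * f)))) := by simp only [mul_assoc]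
        _ = e * (f * (e * (e * f))) := by rw [my_idem_absorb hf]
        _ = e * (f * (e * f)) := by rw [my_idem_absorb he]
        _ = (e * f) * (e * f) := by simp only [mul_assoc]
        _ = e * f := hefi
    · calc (f * e) * (e * f) * (f * e)
          = f * (e * (e * (f * (f * e)))) := by simp only [mul_assoc]
        _ = f * (e * (f * (f * e))) := by rw [my_idem_absorb he]
        _ = f * (e * (f * e)) := by rw [my_idem_absorb hf]
        _ = (f * e) * (f * e) := by simp only [mul_assoc]
        _ = f * e := hfei
  rw [this, hinv]

theorem my_mul_inv_rev (a b : S) : (a * b)⁻¹ = b⁻¹ * a⁻¹ := by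
  have hcomm : (b * b⁻¹) * (a⁻¹ * a) = (a⁻¹ * a) * (b * b⁻¹) :=
    my_idem_comm (my_mul_inv_idem b) (my_inv_mul_idem a)
  symm
  apply InverseSemigroup.inv_unique
  · calc (a * b) * (b⁻¹ * a⁻¹) * (a * b)
        = a * (((b * b⁻¹) * (a⁻¹ * a)) * b) := by simp only [mul_assoc]
      _ = a * (((a⁻¹ * a) * (b * b⁻¹)) * b) := by rw [hcomm]
      _ = (a * a⁻¹ * a) * (b * b⁻¹ * b) := by simp only [mul_assoc]
      _ = a * b := by rw [mul_inv_mul, mul_inv_mul]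
  · calc (b⁻¹ * a⁻¹) * (a * b) * (b⁻¹ * a⁻¹)
        = b⁻¹ * (((a⁻¹ * a) * (b * b⁻¹)) * a⁻¹) := by simp only [mul_assoc]
      _ = b⁻¹ * (((b * b⁻¹) * (a⁻¹ * a)) * a⁻¹) := by rw [← hcomm]
      _ = (b⁻¹ * b * b⁻¹) * (a⁻¹ * a * a⁻¹) := by simp only [mul_assoc]
      _ = b⁻¹ * a⁻¹ := by rw [inv_mul_inv, inv_mul_inv]

theorem my_pw_inv (x : S) : ∀ n, (pw x n)⁻¹ = pw x⁻¹ n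
  | 0 => rfl
  | 1 => rfl
  | (n + 2) => by
    show (pw x (n + 1) * x)⁻¹ = pw x⁻¹ (n + 2)
    rw [my_mul_inv_rev, my_pw_inv x (n + 1),
      ← my_pw_succ' x⁻¹ (n + 1) (by omega)]

/-- `x^n (x⁻¹)^n x^n = x^n`, in right-associated form. -/
theorem my_pw_sand (x : S) (n : ℕ) : pw x n * (pw x⁻¹ n * pw x n) = pw x n := by
  have h := mul_inv_mul (pw x n)
  rw [my_pw_inv x n, mul_assoc] at h
  exact h

/-- Chain property: `E_i E_j = E_j` for `1 ≤ i ≤ j`, where `E_n = x^n (x⁻¹)^n`. -/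
theorem my_E_chain (x : S) {i j : ℕ} (hi : 1 ≤ i) (hij : i ≤ j) :
    (pw x i * pw x⁻¹ i) * (pw x j * pw x⁻¹ j) = pw x j * pw x⁻¹ j := by
  rcases eq_or_lt_of_le hij with rfl | hlt
  · calc (pw x i * pw x⁻¹ i) * (pw x i * pw x⁻¹ i)
        = (pw x i * (pw x⁻¹ i * pw x i)) * pw x⁻¹ i := by simp only [mul_assoc]
      _ = pw x i * pw x⁻¹ i := by rw [my_pw_sand]
  · obtain ⟨m, hm, rfl⟩ : ∃ m, 1 ≤ m ∧ j = i + m := ⟨j - i, by omega, by omega⟩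
    rw [← my_pw_add x i m hi hm]
    calc (pw x i * pw x⁻¹ i) * ((pw x i * pw x m) * pw x⁻¹ (i + m))
        = (pw x i * (pw x⁻¹ i * pw x i)) * (pw x m * pw x⁻¹ (i + m)) := by
          simp only [mul_assoc]
      _ = pw x i * (pw x m * pw x⁻¹ (i + m)) := by rw [my_pw_sand]
      _ = (pw x i * pw x m) * pw x⁻¹ (i + m) := (mul_assoc _ _ _).symm

end InvLemmas

/-- In an inverse semigroup satisfying `(xy)^k = x^k y^k` for some fixed `k > 1`,
the identities `x⁻¹·x·x = x` and `x·x⁻¹·x⁻¹ = x⁻¹` hold. -/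
theorem stmt_10 {S : Type*} [InverseSemigroup S]
    (k : ℕ) (hk : 1 < k)
    (h : ∀ x y : S, pw (x * y) k = pw x k * pw y k) :
    ∀ x : S, x⁻¹ * x * x = x ∧ x * x⁻¹ * x⁻¹ = x⁻¹ := by
  open InverseSemigroup in
  -- Key: `x² (x⁻¹)² = x x⁻¹` for all `x`.
  have key : ∀ x : S, (x * x) * (x⁻¹ * x⁻¹) = x * x⁻¹ := by
    intro x
    have hE1k : x * x⁻¹ = pw x k * pw x⁻¹ k := by
      have hh := h x x⁻¹
      rwa [my_pw_idem (my_mul_inv_idem x) k] at hh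
    have h12 := my_E_chain x (i := 1) (j := 2) (by norm_num) (by norm_num)
    have h2k := my_E_chain x (i := 2) (j := k) (by norm_num) hk
    have hkk := my_E_chain x (i := k) (j := k) (by omega) le_rfl
    have h22 := my_E_chain x (i := 2) (j := 2) (by norm_num) le_rfl
    have hcomm : (pw x k * pw x⁻¹ k) * (pw x 2 * pw x⁻¹ 2)
        = (pw x 2 * pw x⁻¹ 2) * (pw x k * pw x⁻¹ k) := my_idem_comm hkk h22
    have hE21 : pw x 2 * pw x⁻¹ 2 = x * x⁻¹ := by
      calc pw x 2 * pw x⁻¹ 2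
          = (pw x 1 * pw x⁻¹ 1) * (pw x 2 * pw x⁻¹ 2) := h12.symm
        _ = (x * x⁻¹) * (pw x 2 * pw x⁻¹ 2) := rfl
        _ = (pw x k * pw x⁻¹ k) * (pw x 2 * pw x⁻¹ 2) := by rw [← hE1k]
        _ = (pw x 2 * pw x⁻¹ 2) * (pw x k * pw x⁻¹ k) := hcomm
        _ = pw x k * pw x⁻¹ k := h2k
        _ = x * x⁻¹ := hE1k.symm
    rw [my_pw_two] at hE21
    rw [show pw x⁻¹ 2 = x⁻¹ * x⁻¹ from rfl] at hE21
    exact hE21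
  intro x
  have hff := my_inv_mul_idem x
  have hee := my_mul_inv_idem x
  have hcomm : (x * x⁻¹) * (x⁻¹ * x) = (x⁻¹ * x) * (x * x⁻¹) :=
    my_idem_comm hee hff
  -- f e f = f f (where e = x x⁻¹, f = x⁻¹ x)
  have h1 : (x⁻¹ * x) * ((x * x⁻¹) * (x⁻¹ * x)) = (x⁻¹ * x) * (x⁻¹ * x) := by
    have hc := congrArg (fun t => x⁻¹ * t * x) (key x)
    simp only [mul_assoc] at hc ⊢
    exact hc
  have hfe : (x⁻¹ * x) * (x * x⁻¹) = x⁻¹ * x := by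
    calc (x⁻¹ * x) * (x * x⁻¹)
        = ((x⁻¹ * x) * (x⁻¹ * x)) * (x * x⁻¹) := by rw [hff]
      _ = (x⁻¹ * x) * ((x⁻¹ * x) * (x * x⁻¹)) := mul_assoc _ _ _
      _ = (x⁻¹ * x) * ((x * x⁻¹) * (x⁻¹ * x)) := by rw [← hcomm]
      _ = (x⁻¹ * x) * (x⁻¹ * x) := h1
      _ = x⁻¹ * x := hff
  -- e f e = e e
  have hkey' : (x⁻¹ * x⁻¹) * (x * x) = x⁻¹ * x := by
    have := key x⁻¹
    rwa [my_inv_inv] at this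
  have h2 : (x * x⁻¹) * ((x⁻¹ * x) * (x * x⁻¹)) = (x * x⁻¹) * (x * x⁻¹) := by
    have hc := congrArg (fun t => x * t * x⁻¹) hkey'
    simp only [mul_assoc] at hc ⊢
    exact hc
  have hef : (x * x⁻¹) * (x⁻¹ * x) = x * x⁻¹ := by
    calc (x * x⁻¹) * (x⁻¹ * x)
        = ((x * x⁻¹) * (x * x⁻¹)) * (x⁻¹ * x) := by rw [hee]
      _ = (x * x⁻¹) * ((x * x⁻¹) * (x⁻¹ * x)) := mul_assoc _ _ _
      _ = (x * x⁻¹) * ((x⁻¹ * x) * (x * x⁻¹)) := by rw [hcomm]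
      _ = (x * x⁻¹) * (x * x⁻¹) := h2
      _ = x * x⁻¹ := hee
  have hmain : x * x⁻¹ = x⁻¹ * x := by
    rw [← hef, hcomm, hfe]
  constructor
  · rw [← hmain]; exact InverseSemigroup.mul_inv_mul x
  · rw [hmain]; exact InverseSemigroup.inv_mul_inv x
end

section
/- Let S be a cancellative semigroup satisfying (xy)^3 = x^3 y^3 for all x, y in S. Then x^3·y = y·x^3 for all x, y in S (cubes are central). -/
/-- In a cancellative semigroup satisfying `(xy)^3 = x^3 y^3`, cubes are central. -/
theorem stmt_12 {S : Type*} [Semigroup S]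
    (hl : ∀ x y z : S, x * y = x * z → y = z)
    (hr : ∀ x y z : S, y * x = z * x → y = z)
    (h : ∀ x y : S, (x * y) * (x * y) * (x * y) = (x * x * x) * (y * y * y)) :
    ∀ x y : S, (x * x * x) * y = y * (x * x * x) := by
  -- Key lemma: (b*a)^2 = a^2 * b^2
  have key1 : ∀ a b : S, b * (a * (b * a)) = a * (a * (b * b)) := by
    intro a b
    have h1 := h a b
    simp only [mul_assoc] at h1
    have h2 := hl a _ _ h1
    apply hr b
    simp only [mul_assoc]
    exact h2
  intro x y
  -- (y*x)^4 = y^4 * x^4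
  have A : y * (x * (y * (x * (y * (x * (y * x)))))) =
      y * (y * (y * (y * (x * (x * (x * x)))))) := by
    have k2 := key1 (y * y) (x * x)
    calc y * (x * (y * (x * (y * (x * (y * x))))))
        = (y * (x * (y * x))) * (y * (x * (y * x))) := by simp only [mul_assoc]
      _ = (x * (x * (y * y))) * (x * (x * (y * y))) := by rw [key1 x y]
      _ = y * (y * (y * (y * (x * (x * (x * x)))))) := by
          simpa only [mul_assoc] using k2
  -- (y*x)^4 = y^3 * x^3 * (y*x)
  have B : y * (x * (y * (x * (y * (x * (y * x)))))) =
      y * (y * (y * (x * (x * (x * (y * x)))))) := by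
    calc y * (x * (y * (x * (y * (x * (y * x))))))
        = ((y * x) * (y * x) * (y * x)) * (y * x) := by simp only [mul_assoc]
      _ = ((y * y * y) * (x * x * x)) * (y * x) := by rw [h y x]
      _ = y * (y * (y * (x * (x * (x * (y * x)))))) := by simp only [mul_assoc]
  have C := A.symm.trans B
  have C1 := hl y _ _ C
  have C2 := hl y _ _ C1
  have C3 := hl y _ _ C2
  -- C3 : y * (x * (x * (x * x))) = x * (x * (x * (y * x)))
  apply hr x
  simp only [mul_assoc]
  exact C3.symm
end

section
/- Let S be a cancellative semigroup satisfying (xy)^3 = x^3 y^3 for all x, y in S. Then x·y^2·x = y·x^2·y for all x, y in S. -/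
/-- In a cancellative semigroup satisfying `(xy)^3 = x^3 y^3`, one has
`x·y²·x = y·x²·y` for all `x, y`. -/
theorem stmt_13 {S : Type*} [Semigroup S]
    (hl : ∀ x y z : S, x * y = x * z → y = z)
    (hr : ∀ x y z : S, y * x = z * x → y = z)
    (h : ∀ x y : S, (x * y) * (x * y) * (x * y) = (x * x * x) * (y * y * y)) :
    ∀ x y : S, x * (y * y) * x = y * (x * x) * y := by
  -- Step 1: (x*y)*(x*y) = (y*y)*(x*x)
  have A : ∀ x y : S, (x * y) * (x * y) = (y * y) * (x * x) := by
    intro x y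
    apply hl y
    apply hr x
    have := h y x
    simp only [mul_assoc] at this ⊢
    exact this
  -- Step 2: cubes are central
  have hc : ∀ a b : S, (a * a * a) * b = b * (a * a * a) := by
    intro a b
    apply hr (b * b * b)
    apply hl a
    have key : (a * b) * ((a * a * a) * (b * b * b))
        = (a * a * a * a) * (b * b * b * b) := by
      calc (a * b) * ((a * a * a) * (b * b * b))
          = (a * b) * ((a * b) * (a * b) * (a * b)) := by rw [h a b]
        _ = ((a * b) * (a * b)) * ((a * b) * (a * b)) := by
            simp only [mul_assoc]
        _ = ((b * b) * (a * a)) * ((b * b) * (a * a)) := by rw [A a b]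
        _ = ((a * a) * (a * a)) * ((b * b) * (b * b)) := A (b * b) (a * a)
        _ = (a * a * a * a) * (b * b * b * b) := by simp only [mul_assoc]
    calc a * ((a * a * a) * b * (b * b * b))
        = (a * a * a * a) * (b * b * b * b) := by simp only [mul_assoc]
      _ = (a * b) * ((a * a * a) * (b * b * b)) := key.symm
      _ = a * (b * (a * a * a) * (b * b * b)) := by simp only [mul_assoc]
  -- Step 3: the goal
  intro x y
  apply hl x
  apply hl x
  calc x * (x * (x * (y * y) * x))
      = (x * x * x) * ((y * y) * x) := by simp only [mul_assoc]
    _ = ((y * y) * x) * (x * x * x) := hc x ((y * y) * x)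
    _ = ((y * y) * (x * x)) * (x * x) := by simp only [mul_assoc]
    _ = ((x * y) * (x * y)) * (x * x) := by rw [A x y]
    _ = (x * (x * y)) * (x * (x * y)) := (A x (x * y)).symm
    _ = x * (x * (y * (x * x) * y)) := by simp only [mul_assoc]
end

section
/- Let S be a cancellative semigroup satisfying (xy)^3 = x^3 y^3 for all x, y in S, and suppose the cubing map is injective (x^3 = y^3 implies x = y). Then S is commutative. -/
/-- A cancellative semigroup satisfying `(xy)^3 = x^3 y^3` in which the cubing map is
injective is commutative. -/
theorem stmt_14 {S : Type*} [Semigroup S]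
    (hl : ∀ x y z : S, x * y = x * z → y = z)
    (hr : ∀ x y z : S, y * x = z * x → y = z)
    (h : ∀ x y : S, (x * y) * (x * y) * (x * y) = (x * x * x) * (y * y * y))
    (hinj : ∀ x y : S, x * x * x = y * y * y → x = y) :
    ∀ x y : S, x * y = y * x := by
  -- Step 1: (y*x)*(y*x) = (x*x)*(y*y)
  have sq : ∀ x y : S, (y*x)*(y*x) = (x*x)*(y*y) := by
    intro x y
    apply hr y
    apply hl x
    have h1 := h x y
    simp only [mul_assoc] at h1 ⊢
    exact h1
  -- Step 2: y*(x*x)*y = x*(y*y)*x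
  have star : ∀ x y : S, y*(x*x)*y = x*(y*y)*x := by
    intro x y
    apply hr x
    apply hl x
    have h1 := sq x (x*y)
    rw [sq y x] at h1
    simp only [mul_assoc] at h1 ⊢
    exact h1
  -- Step 3: cubes are central
  have central : ∀ x y : S, (x*x*x)*y = y*(x*x*x) := by
    intro x y
    apply hl y
    apply hl x
    have h1 := star x (x*y)
    rw [sq y x] at h1
    simp only [mul_assoc] at h1 ⊢
    exact h1
  intro x y
  apply hinj
  have h1 := h x y
  have h2 := h y x
  have h3 := central x (y*y*y)
  simp only [mul_assoc] at h1 h2 h3 ⊢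
  rw [h1, h2, h3]
end

section
/- Let G be a group satisfying (ab)^3 = a^3 b^3 for all a, b in G and having no elements of order 3 (x^3 = 1 implies x = 1). Then G is abelian. -/
/-- A group satisfying `(ab)^3 = a^3 b^3` with no elements of order `3` is abelian. -/
theorem stmt_15 {G : Type*} [Group G]
    (h : ∀ a b : G, (a * b) ^ 3 = a ^ 3 * b ^ 3)
    (h3 : ∀ x : G, x ^ 3 = 1 → x = 1) :
    ∀ x y : G, x * y = y * x := by
  -- Step 1: (b*a)^2 = a^2 * b^2
  have h2 : ∀ a b : G, (b * a) ^ 2 = a ^ 2 * b ^ 2 := by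
    intro a b
    have := h a b
    have e1 : a * ((b * a) ^ 2 * b) = a * (a ^ 2 * b ^ 2 * b) := by
      calc a * ((b * a) ^ 2 * b) = (a * b) ^ 3 := by
            simp [pow_succ, mul_assoc]
        _ = a ^ 3 * b ^ 3 := this
        _ = a * (a ^ 2 * b ^ 2 * b) := by group
    have e2 := mul_left_cancel e1
    exact mul_right_cancel e2
  -- Step 2: cubes are central
  have hc : ∀ x y : G, x * y ^ 3 = y ^ 3 * x := by
    intro x y
    have e1 : (x * y) ^ 4 = x ^ 3 * y ^ 3 * (x * y) := by
      calc (x * y) ^ 4 = (x * y) ^ 3 * (x * y) := by rw [← pow_succ]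
        _ = x ^ 3 * y ^ 3 * (x * y) := by rw [h]
    have e2 : (x * y) ^ 4 = x ^ 4 * y ^ 4 := by
      calc (x * y) ^ 4 = ((x * y) ^ 2) ^ 2 := by group
        _ = (y ^ 2 * x ^ 2) ^ 2 := by rw [h2 y x]
        _ = (x ^ 2) ^ 2 * (y ^ 2) ^ 2 := h2 (x ^ 2) (y ^ 2)
        _ = x ^ 4 * y ^ 4 := by group
    have e3 : x ^ 3 * y ^ 3 * (x * y) = x ^ 4 * y ^ 4 := e1 ▸ e2
    have e4 : x ^ 3 * (y ^ 3 * x * y) = x ^ 3 * (x * y ^ 3 * y) := by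
      calc x ^ 3 * (y ^ 3 * x * y) = x ^ 3 * y ^ 3 * (x * y) := by group
        _ = x ^ 4 * y ^ 4 := e3
        _ = x ^ 3 * (x * y ^ 3 * y) := by group
    have e5 := mul_left_cancel e4
    have e6 : y ^ 3 * x = x * y ^ 3 := mul_right_cancel e5
    exact e6.symm
  -- Step 3: commutator cubes to 1
  intro x y
  have key : (x * y * x⁻¹ * y⁻¹) ^ 3 = 1 := by
    have e1 : (x * y * x⁻¹ * y⁻¹) ^ 3 = (x * y * x⁻¹) ^ 3 * (y⁻¹) ^ 3 := h _ _
    have e2 : (x * y * x⁻¹) ^ 3 = x * y ^ 3 * x⁻¹ := by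
      simp [pow_succ, mul_assoc]
    rw [e1, e2, hc x y]
    group
  have := h3 _ key
  have e7 : (x * y) * (x⁻¹ * y⁻¹) = 1 := by
    calc (x * y) * (x⁻¹ * y⁻¹) = x * y * x⁻¹ * y⁻¹ := by group
      _ = 1 := this
  have := mul_eq_one_iff_eq_inv.mp e7
  calc x * y = (x⁻¹ * y⁻¹)⁻¹ := by rw [← this]
    _ = y * x := by group
end
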